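/- arXiv:2105.01286 — 4 statements merged into one kernel-verified Lean document; each statement's English description precedes it below -/
import Mathlib

section
/- Let (b*, d*, h*) be a solution (global minimizer) of the relaxed treatment planning problem: minimize the total penalty ∑_{t=1}^T φ_t(d_t) + ∑_{t=1}^T ψ_t(h_t) over variables b_t ∈ ℝ^n, d_t ∈ ℝ^K, h_t ∈ ℝ^K (t = 1,…,T) subject to h_{t,i} ≥ f_{t,i}(h_{t-1}, d_t) for i ∈ 𝒯, h_{t,i} ≤ f_{t,i}(h_{t-1}, d_t) for i ∉ 𝒯, the health bounds h_{t,i} ≤ H_{t,i} for i ∈ 𝒯 and h_{t,i} ≥ H_{t,i} for i ∉ 𝒯, and the dose constraints d_t = A_t b_t, 0 ≤ d_t ≤ D_t, 0 ≤ b_t ≤ B_t, where f is the linear-quadratic dynamics and each ψ_t satisfies the monotonicity condition. Then the relaxed dynamics inequalities are tight at the optimum: h*_t = f_t(h*_{t-1}, d*_t) for all t = 1,…,T. -/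
open Finset Matrix

/-- Data of the adaptive radiation treatment planning problem:
`K` anatomical structures, `n` beams, `T` treatment sessions. -/
structure PlanData (K n T : ℕ) where
  /-- the set of targets 𝒯 ⊆ {1,…,K} -/
  targets : Finset (Fin K)
  /-- LQ model coefficients α_t -/
  alpha : ℕ → Fin K → ℝ
  /-- LQ model coefficients β_t -/
  beta : ℕ → Fin K → ℝ
  /-- LQ model coefficients γ_t -/
  gamma : ℕ → Fin K → ℝ
  /-- initial health status h₀ -/
  hinit : Fin K → ℝ
  /-- dose matrices A_t -/
  A : ℕ → Matrix (Fin K) (Fin n) ℝ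
  /-- dose upper bounds D_t -/
  doseUB : ℕ → Fin K → ℝ
  /-- beam upper bounds B_t -/
  beamUB : ℕ → Fin n → ℝ
  /-- health bounds H_t -/
  healthBnd : ℕ → Fin K → ℝ
  /-- dose penalty functions φ_t -/
  dosePen : ℕ → (Fin K → ℝ) → ℝ
  /-- health penalty functions ψ_t -/
  healthPen : ℕ → (Fin K → ℝ) → ℝ

namespace PlanData

variable {K n T : ℕ}

/-- Linear-quadratic health dynamics:
`f_{t,i}(h_{t-1}, d_t) = h_{t-1,i} − α_{t,i} d_{t,i} − β_{t,i} d_{t,i}² + γ_{t,i}`. -/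
def dyn (P : PlanData K n T) (t : ℕ) (hprev d : Fin K → ℝ) (i : Fin K) : ℝ :=
  hprev i - P.alpha t i * d i - P.beta t i * (d i) ^ 2 + P.gamma t i

/-- Dose constraints: `d_t = A_t b_t`, `0 ≤ d_t ≤ D_t`, `0 ≤ b_t ≤ B_t`. -/
def DoseFeas (P : PlanData K n T) (b : ℕ → Fin n → ℝ) (d : ℕ → Fin K → ℝ) : Prop :=
  ∀ t ∈ Finset.Icc 1 T,
    d t = P.A t *ᵥ b t ∧
    (∀ i, 0 ≤ d t i ∧ d t i ≤ P.doseUB t i) ∧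
    (∀ j, 0 ≤ b t j ∧ b t j ≤ P.beamUB t j)

/-- Health bounds: `h_{t,i} ≤ H_{t,i}` for targets, `h_{t,i} ≥ H_{t,i}` for non-targets. -/
def HealthBndFeas (P : PlanData K n T) (h : ℕ → Fin K → ℝ) : Prop :=
  ∀ t ∈ Finset.Icc 1 T,
    (∀ i ∈ P.targets, h t i ≤ P.healthBnd t i) ∧
    (∀ i ∉ P.targets, P.healthBnd t i ≤ h t i)

/-- Feasibility for the relaxed treatment planning problem (\ref{prob:relax}). -/
def RelaxFeas (P : PlanData K n T) (b : ℕ → Fin n → ℝ) (d h : ℕ → Fin K → ℝ) : Prop :=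
  h 0 = P.hinit ∧
  (∀ t ∈ Finset.Icc 1 T,
    (∀ i ∈ P.targets, P.dyn t (h (t - 1)) (d t) i ≤ h t i) ∧
    (∀ i ∉ P.targets, h t i ≤ P.dyn t (h (t - 1)) (d t) i)) ∧
  P.HealthBndFeas h ∧ P.DoseFeas b d

/-- Feasibility for the original optimal control problem (\ref{prob:dyn_single}). -/
def OrigFeas (P : PlanData K n T) (b : ℕ → Fin n → ℝ) (d h : ℕ → Fin K → ℝ) : Prop :=
  h 0 = P.hinit ∧
  (∀ t ∈ Finset.Icc 1 T, ∀ i, h t i = P.dyn t (h (t - 1)) (d t) i) ∧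
  P.HealthBndFeas h ∧ P.DoseFeas b d

/-- Total penalty `∑_{t=1}^T φ_t(d_t) + ∑_{t=1}^T ψ_t(h_t)`. -/
def Obj (P : PlanData K n T) (d h : ℕ → Fin K → ℝ) : ℝ :=
  ∑ t ∈ Finset.Icc 1 T, P.dosePen t (d t) + ∑ t ∈ Finset.Icc 1 T, P.healthPen t (h t)

/-- Monotonicity condition (\ref{cond:health_mono}): each ψ_t is strictly increasing in
the health status of each target and strictly decreasing in that of each non-target,
all other coordinates held fixed. -/
def StrictMonoCond (P : PlanData K n T) : Prop :=
  ∀ (t : ℕ) (i : Fin K) (g : Fin K → ℝ) (x y : ℝ), x < y →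
    (i ∈ P.targets →
      P.healthPen t (Function.update g i x) < P.healthPen t (Function.update g i y)) ∧
    (i ∉ P.targets →
      P.healthPen t (Function.update g i y) < P.healthPen t (Function.update g i x))

end PlanData

private lemma dyn_eq_of_eq {K n T : ℕ} (P : PlanData K n T) {t : ℕ} {hp hp' d : Fin K → ℝ}
    {i : Fin K} (h : hp i = hp' i) : P.dyn t hp d i = P.dyn t hp' d i := by
  unfold PlanData.dyn; rw [h]

private lemma dyn_le_of_le {K n T : ℕ} (P : PlanData K n T) {t : ℕ} {hp hp' d : Fin K → ℝ}
    {i : Fin K} (h : hp i ≤ hp' i) : P.dyn t hp d i ≤ P.dyn t hp' d i := by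
  unfold PlanData.dyn; linarith

/-- Proposition 1: at any solution (global minimizer) of the relaxed treatment planning
problem, the relaxed dynamics inequalities are tight, i.e.
`h*_t = f_t(h*_{t-1}, d*_t)` for all `t = 1,…,T`. -/
theorem relaxed_dynamics_tight_at_optimum {K n T : ℕ} (P : PlanData K n T)
    (hβ : ∀ t i, 0 ≤ P.beta t i)
    (hA : ∀ t i j, 0 ≤ P.A t i j)
    (hD : ∀ t i, 0 ≤ P.doseUB t i)
    (hB : ∀ t j, 0 ≤ P.beamUB t j)
    (hmono : P.StrictMonoCond)
    (b : ℕ → Fin n → ℝ) (d h : ℕ → Fin K → ℝ)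
    (hfeas : P.RelaxFeas b d h)
    (hopt : ∀ b' d' h', P.RelaxFeas b' d' h' → P.Obj d h ≤ P.Obj d' h') :
    ∀ t ∈ Finset.Icc 1 T, ∀ i, h t i = P.dyn t (h (t - 1)) (d t) i := by
  obtain ⟨h0, hdyn, hbnd, hdose⟩ := hfeas
  intro t htmem i
  have ht := Finset.mem_Icc.mp htmem
  by_contra hne
  set v := P.dyn t (h (t - 1)) (d t) i with hvdef
  set h' : ℕ → Fin K → ℝ := fun s => if s = t then Function.update (h t) i v else h s with hh'
  have ht0 : t ≠ 0 := by omega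
  have h't : h' t = Function.update (h t) i v := by simp [hh']
  have h'ne : ∀ s, s ≠ t → h' s = h s := by intro s hs; simp [hh', hs]
  have hti : h' t i = v := by rw [h't, Function.update_self]
  have htj : ∀ j, j ≠ i → h' t j = h t j := by
    intro j hj; rw [h't, Function.update_of_ne hj]
  by_cases hi : i ∈ P.targets
  · -- target case: v < h t i, decrease h t i to v
    have hlt : v < h t i := lt_of_le_of_ne ((hdyn t htmem).1 i hi) (Ne.symm hne)
    have hfeas' : P.RelaxFeas b d h' := by
      refine ⟨by rw [h'ne 0 (by omega)]; exact h0, ?_, ?_, hdose⟩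
      · intro s hsmem
        have hs := Finset.mem_Icc.mp hsmem
        by_cases hst : s = t
        · subst hst
          have hp : h' (s - 1) = h (s - 1) := h'ne _ (by omega)
          constructor
          · intro j hj
            by_cases hji : j = i
            · subst hji; rw [hti, hp]
            · rw [htj j hji, hp]; exact (hdyn s hsmem).1 j hj
          · intro j hj
            have hji : j ≠ i := fun e => hj (e ▸ hi)
            rw [htj j hji, hp]; exact (hdyn s hsmem).2 j hj
        · by_cases hst1 : s = t + 1
          · have hsm : s - 1 = t := by omega
            have heq : ∀ j, j ≠ i → h' (s - 1) j = h (s - 1) j := by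
              intro j hj; rw [hsm]; exact htj j hj
            constructor
            · intro j hj
              rw [h'ne s hst]
              by_cases hji : j = i
              · subst hji
                refine le_trans (le_trans (dyn_le_of_le P ?_) (le_refl _)) ((hdyn s hsmem).1 j hj)
                rw [hsm, hti]; exact hlt.le
              · rw [dyn_eq_of_eq P (heq j hji)]; exact (hdyn s hsmem).1 j hj
            · intro j hj
              have hji : j ≠ i := fun e => hj (e ▸ hi)
              rw [h'ne s hst, dyn_eq_of_eq P (heq j hji)]
              exact (hdyn s hsmem).2 j hj
          · have hp : h' (s - 1) = h (s - 1) := h'ne _ (by omega)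
            rw [h'ne s hst, hp]; exact hdyn s hsmem
      · intro s hsmem
        by_cases hst : s = t
        · subst hst
          constructor
          · intro j hj
            by_cases hji : j = i
            · subst hji; rw [hti]
              exact le_trans hlt.le ((hbnd s hsmem).1 j hj)
            · rw [htj j hji]; exact (hbnd s hsmem).1 j hj
          · intro j hj
            have hji : j ≠ i := fun e => hj (e ▸ hi)
            rw [htj j hji]; exact (hbnd s hsmem).2 j hj
        · rw [h'ne s hst]; exact hbnd s hsmem
    have hlt2 : P.healthPen t (h' t) < P.healthPen t (h t) := by
      have := (hmono t i (h t) v (h t i) hlt).1 hi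
      rwa [Function.update_eq_self, ← h't] at this
    have hobj : P.Obj d h' < P.Obj d h := by
      unfold PlanData.Obj
      have hsum : ∑ s ∈ Finset.Icc 1 T, P.healthPen s (h' s) <
          ∑ s ∈ Finset.Icc 1 T, P.healthPen s (h s) := by
        refine Finset.sum_lt_sum (fun s hs => ?_) ⟨t, htmem, hlt2⟩
        by_cases hst : s = t
        · subst hst; exact hlt2.le
        · rw [h'ne s hst]
      linarith
    exact absurd (hopt b d h' hfeas') (not_le.mpr hobj)
  · -- non-target case: h t i < v, increase h t i to v
    have hlt : h t i < v := lt_of_le_of_ne ((hdyn t htmem).2 i hi) hne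
    have hfeas' : P.RelaxFeas b d h' := by
      refine ⟨by rw [h'ne 0 (by omega)]; exact h0, ?_, ?_, hdose⟩
      · intro s hsmem
        have hs := Finset.mem_Icc.mp hsmem
        by_cases hst : s = t
        · subst hst
          have hp : h' (s - 1) = h (s - 1) := h'ne _ (by omega)
          constructor
          · intro j hj
            have hji : j ≠ i := fun e => hi (e ▸ hj)
            rw [htj j hji, hp]; exact (hdyn s hsmem).1 j hj
          · intro j hj
            by_cases hji : j = i
            · subst hji; rw [hti, hp]
            · rw [htj j hji, hp]; exact (hdyn s hsmem).2 j hj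
        · by_cases hst1 : s = t + 1
          · have hsm : s - 1 = t := by omega
            have heq : ∀ j, j ≠ i → h' (s - 1) j = h (s - 1) j := by
              intro j hj; rw [hsm]; exact htj j hj
            constructor
            · intro j hj
              have hji : j ≠ i := fun e => hi (e ▸ hj)
              rw [h'ne s hst, dyn_eq_of_eq P (heq j hji)]
              exact (hdyn s hsmem).1 j hj
            · intro j hj
              rw [h'ne s hst]
              by_cases hji : j = i
              · subst hji
                refine le_trans ((hdyn s hsmem).2 j hj) (dyn_le_of_le P ?_)
                rw [hsm, hti]; exact hlt.le
              · rw [dyn_eq_of_eq P (heq j hji)]; exact (hdyn s hsmem).2 j hj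
          · have hp : h' (s - 1) = h (s - 1) := h'ne _ (by omega)
            rw [h'ne s hst, hp]; exact hdyn s hsmem
      · intro s hsmem
        by_cases hst : s = t
        · subst hst
          constructor
          · intro j hj
            have hji : j ≠ i := fun e => hi (e ▸ hj)
            rw [htj j hji]; exact (hbnd s hsmem).1 j hj
          · intro j hj
            by_cases hji : j = i
            · subst hji; rw [hti]
              exact le_trans ((hbnd s hsmem).2 j hj) hlt.le
            · rw [htj j hji]; exact (hbnd s hsmem).2 j hj
        · rw [h'ne s hst]; exact hbnd s hsmem
    have hlt2 : P.healthPen t (h' t) < P.healthPen t (h t) := by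
      have := (hmono t i (h t) (h t i) v hlt).2 hi
      rwa [Function.update_eq_self, ← h't] at this
    have hobj : P.Obj d h' < P.Obj d h := by
      unfold PlanData.Obj
      have hsum : ∑ s ∈ Finset.Icc 1 T, P.healthPen s (h' s) <
          ∑ s ∈ Finset.Icc 1 T, P.healthPen s (h s) := by
        refine Finset.sum_lt_sum (fun s hs => ?_) ⟨t, htmem, hlt2⟩
        by_cases hst : s = t
        · subst hst; exact hlt2.le
        · rw [h'ne s hst]
      linarith
    exact absurd (hopt b d h' hfeas') (not_le.mpr hobj)
end

section
/- Suppose (b, d, h) is feasible for the relaxed treatment planning problem (i.e., it satisfies h_{t,i} ≥ f_{t,i}(h_{t-1}, d_t) for i ∈ 𝒯 and h_{t,i} ≤ f_{t,i}(h_{t-1}, d_t) for i ∉ 𝒯 for all t, the health bounds h_{t,i} ≤ H_{t,i} for i ∈ 𝒯 and h_{t,i} ≥ H_{t,i} for i ∉ 𝒯, and d_t = A_t b_t, 0 ≤ d_t ≤ D_t, 0 ≤ b_t ≤ B_t for all t), and suppose there exist a session t ∈ {1,…,T} and a target i ∈ 𝒯 with h_{t,i} > f_{t,i}(h_{t-1},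 d_t). If each ψ_s satisfies the monotonicity condition, then there exists ĥ, differing from h only in the single entry ĥ_{t,i} < h_{t,i}, such that (b, d, ĥ) is feasible for the relaxed problem and ∑_{s=1}^T φ_s(d_s) + ∑_{s=1}^T ψ_s(ĥ_s) < ∑_{s=1}^T φ_s(d_s) + ∑_{s=1}^T ψ_s(h_s). In particular, (b, d, h) is not optimal for the relaxed problem. -/
open Finset Matrix

/-- If a relaxed-feasible point has a slack target dynamics inequality
`h_{t,i} > f_{t,i}(h_{t-1}, d_t)` at some session `t` and target `i ∈ 𝒯`, then
lowering that single entry yields a relaxed-feasible point with strictly smaller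
objective; in particular `(b, d, h)` is not optimal for the relaxed problem. -/
theorem relaxed_target_slack_improvable {K n T : ℕ} (P : PlanData K n T)
    (hβ : ∀ t i, 0 ≤ P.beta t i)
    (hA : ∀ t i j, 0 ≤ P.A t i j)
    (hD : ∀ t i, 0 ≤ P.doseUB t i)
    (hB : ∀ t j, 0 ≤ P.beamUB t j)
    (hmono : P.StrictMonoCond)
    (b : ℕ → Fin n → ℝ) (d h : ℕ → Fin K → ℝ)
    (hfeas : P.RelaxFeas b d h)
    (t : ℕ) (ht : t ∈ Finset.Icc 1 T) (i : Fin K) (hi : i ∈ P.targets)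
    (hslack : P.dyn t (h (t - 1)) (d t) i < h t i) :
    (∃ hhat : ℕ → Fin K → ℝ,
      hhat t i < h t i ∧
      (∀ s j, ¬(s = t ∧ j = i) → hhat s j = h s j) ∧
      P.RelaxFeas b d hhat ∧
      P.Obj d hhat < P.Obj d h) ∧
    ¬ (∀ b' d' h', P.RelaxFeas b' d' h' → P.Obj d h ≤ P.Obj d' h') := by
  obtain ⟨ht1, htT⟩ := Finset.mem_Icc.mp ht
  obtain ⟨h0, hdyn, hbnd, hdose⟩ := hfeas
  set v := P.dyn t (h (t - 1)) (d t) i with hv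
  set hhat : ℕ → Fin K → ℝ :=
    fun s => if s = t then Function.update (h t) i v else h s with hhdef
  have hht : hhat t = Function.update (h t) i v := by simp [hhdef]
  have hne : ∀ s, s ≠ t → hhat s = h s := fun s hs => by simp [hhdef, hs]
  have hlt : hhat t i < h t i := by rw [hht, Function.update_self]; exact hslack
  have hother : ∀ s j, ¬(s = t ∧ j = i) → hhat s j = h s j := by
    intro s j hsj
    by_cases hs : s = t
    · subst hs
      have hj : j ≠ i := fun hj => hsj ⟨rfl, hj⟩
      rw [hht, Function.update_of_ne hj]
    · rw [hne s hs]
  have hprev : hhat (t - 1) = h (t - 1) := hne _ (by omega)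
  have hfeas' : P.RelaxFeas b d hhat := by
    refine ⟨?_, ?_, ?_, hdose⟩
    · rw [hne 0 (by omega), h0]
    · intro s hs
      obtain ⟨hdynT, hdynN⟩ := hdyn s hs
      by_cases hst : s = t
      · subst hst
        rw [hprev, hht]
        constructor
        · intro j hj
          by_cases hji : j = i
          · subst hji; rw [Function.update_self]
          · rw [Function.update_of_ne hji]; exact hdynT j hj
        · intro j hj
          have hji : j ≠ i := fun e => hj (e ▸ hi)
          rw [Function.update_of_ne hji]; exact hdynN j hj
      · rw [hne s hst]
        by_cases hst' : s - 1 = t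
        · constructor
          · intro j hj
            by_cases hji : j = i
            · subst hji
              have key : P.dyn s (Function.update (h t) j v) (d s) j
                  ≤ P.dyn s (h t) (d s) j := by
                simp only [PlanData.dyn, Function.update_self]
                linarith
              have h2 := hdynT j hj
              rw [hst'] at h2
              rw [hst', hht]
              exact key.trans h2
            · have key : P.dyn s (Function.update (h t) i v) (d s) j
                  = P.dyn s (h t) (d s) j := by
                simp [PlanData.dyn, Function.update_of_ne hji]
              have h2 := hdynT j hj
              rw [hst'] at h2
              rw [hst', hht, key]
              exact h2
          · intro j hj
            have hji : j ≠ i := fun e => hj (e ▸ hi)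
            have key : P.dyn s (Function.update (h t) i v) (d s) j
                = P.dyn s (h t) (d s) j := by
              simp [PlanData.dyn, Function.update_of_ne hji]
            have h2 := hdynN j hj
            rw [hst'] at h2
            rw [hst', hht, key]
            exact h2
        · rw [hne (s - 1) hst']
          exact ⟨hdynT, hdynN⟩
    · intro s hs
      obtain ⟨hb1, hb2⟩ := hbnd s hs
      by_cases hst : s = t
      · subst hst
        rw [hht]
        refine ⟨fun j hj => ?_, fun j hj => ?_⟩
        · by_cases hji : j = i
          · subst hji
            rw [Function.update_self]
            exact hslack.le.trans (hb1 j hj)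
          · rw [Function.update_of_ne hji]; exact hb1 j hj
        · have hji : j ≠ i := fun e => hj (e ▸ hi)
          rw [Function.update_of_ne hji]; exact hb2 j hj
      · rw [hne s hst]; exact ⟨hb1, hb2⟩
  have hmono' := (hmono t i (h t) v (h t i) hslack).1 hi
  rw [Function.update_eq_self] at hmono'
  have hobj : P.Obj d hhat < P.Obj d h := by
    unfold PlanData.Obj
    have hsum : ∑ s ∈ Finset.Icc 1 T, P.healthPen s (hhat s)
        < ∑ s ∈ Finset.Icc 1 T, P.healthPen s (h s) := by
      apply Finset.sum_lt_sum
      · intro s hs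
        by_cases hst : s = t
        · subst hst; rw [hht]; exact hmono'.le
        · rw [hne s hst]
      · exact ⟨t, ht, by rw [hht]; exact hmono'⟩
    linarith
  refine ⟨⟨hhat, hlt, hother, hfeas', hobj⟩, fun hopt => ?_⟩
  exact absurd (hopt b d hhat hfeas') (not_le.mpr hobj)
end

section
/- Suppose (b, d, h) is feasible for the relaxed treatment planning problem (i.e., it satisfies h_{t,i} ≥ f_{t,i}(h_{t-1}, d_t) for i ∈ 𝒯 and h_{t,i} ≤ f_{t,i}(h_{t-1}, d_t) for i ∉ 𝒯 for all t, the health bounds h_{t,i} ≤ H_{t,i} for i ∈ 𝒯 and h_{t,i} ≥ H_{t,i} for i ∉ 𝒯, and d_t = A_t b_t, 0 ≤ d_t ≤ D_t, 0 ≤ b_t ≤ B_t for all t), and suppose there exist a session t ∈ {1,…,T} and a non-target structure i ∉ 𝒯 with h_{t,i} < f_{t,i}(h_{t-1}, d_t). If each ψ_s satisfies the monotonicity condition, then there exists ĥ, differing from h only in the single entry ĥ_{t,i} > h_{t,i}, such that (b, d, ĥ) is feasible for the relaxed problem and ∑_{s=1}^T φ_s(d_s) + ∑_{s=1}^T ψ_s(ĥ_s)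 < ∑_{s=1}^T φ_s(d_s) + ∑_{s=1}^T ψ_s(h_s). In particular, (b, d, h) is not optimal for the relaxed problem. -/
open Finset Matrix

/-- If a relaxed-feasible point has a slack non-target dynamics inequality
`h_{t,i} < f_{t,i}(h_{t-1}, d_t)` at some session `t` and non-target `i ∉ 𝒯`, then
raising that single entry yields a relaxed-feasible point with strictly smaller
objective; in particular `(b, d, h)` is not optimal for the relaxed problem. -/
theorem relaxed_nontarget_slack_improvable {K n T : ℕ} (P : PlanData K n T)
    (hβ : ∀ t i, 0 ≤ P.beta t i)
    (hA : ∀ t i j, 0 ≤ P.A t i j)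
    (hD : ∀ t i, 0 ≤ P.doseUB t i)
    (hB : ∀ t j, 0 ≤ P.beamUB t j)
    (hmono : P.StrictMonoCond)
    (b : ℕ → Fin n → ℝ) (d h : ℕ → Fin K → ℝ)
    (hfeas : P.RelaxFeas b d h)
    (t : ℕ) (ht : t ∈ Finset.Icc 1 T) (i : Fin K) (hi : i ∉ P.targets)
    (hslack : h t i < P.dyn t (h (t - 1)) (d t) i) :
    (∃ hhat : ℕ → Fin K → ℝ,
      h t i < hhat t i ∧
      (∀ s j, ¬(s = t ∧ j = i) → hhat s j = h s j) ∧
      P.RelaxFeas b d hhat ∧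
      P.Obj d hhat < P.Obj d h) ∧
    ¬ (∀ b' d' h', P.RelaxFeas b' d' h' → P.Obj d h ≤ P.Obj d' h') := by
  obtain ⟨h0, hdynF, hbnd, hdose⟩ := hfeas
  have ht1 : 1 ≤ t ∧ t ≤ T := Finset.mem_Icc.mp ht
  set v := P.dyn t (h (t - 1)) (d t) i with hv
  set hhat : ℕ → Fin K → ℝ :=
    fun s => if s = t then Function.update (h t) i v else h s with hhdef
  have key : ∀ s j, ¬(s = t ∧ j = i) → hhat s j = h s j := by
    intro s j hsj
    simp only [hhdef]
    by_cases hs : s = t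
    · subst hs
      have hji : j ≠ i := fun hj => hsj ⟨rfl, hj⟩
      simp [Function.update_of_ne hji]
    · simp [hs]
  have hhat_t_i : hhat t i = v := by simp [hhdef]
  have hgt : h t i < hhat t i := by rw [hhat_t_i]; exact hslack
  -- dyn equality when j ≠ i
  have dyn_eq : ∀ s (j : Fin K), j ≠ i →
      P.dyn s (hhat (s - 1)) (d s) j = P.dyn s (h (s - 1)) (d s) j := by
    intro s j hji
    unfold PlanData.dyn
    rw [key (s - 1) j (fun hsj => hji hsj.2)]
  -- dyn monotone: dyn with hhat ≥ dyn with h (since hhat ≥ h pointwise)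
  have hpt : ∀ s (j : Fin K), h s j ≤ hhat s j := by
    intro s j
    by_cases hsj : s = t ∧ j = i
    · obtain ⟨hs, hj⟩ := hsj; subst hs; subst hj; exact le_of_lt hgt
    · rw [key s j hsj]
  have dyn_le : ∀ s (j : Fin K),
      P.dyn s (h (s - 1)) (d s) j ≤ P.dyn s (hhat (s - 1)) (d s) j := by
    intro s j
    unfold PlanData.dyn
    have := hpt (s - 1) j
    linarith
  have hhat_eq : ∀ s, s ≠ t → hhat s = h s := by
    intro s hs
    funext j
    exact key s j (fun hsj => hs hsj.1)
  have hhat_prev : hhat (t - 1) = h (t - 1) := hhat_eq (t - 1) (by omega)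
  have hfeas' : P.RelaxFeas b d hhat := by
    refine ⟨?_, ?_, ?_, hdose⟩
    · rw [hhat_eq 0 (by omega)]; exact h0
    · intro s hs
      refine ⟨fun j hj => ?_, fun j hj => ?_⟩
      · have hji : j ≠ i := fun hji => hi (hji ▸ hj)
        rw [dyn_eq s j hji, key s j (fun hsj => hji hsj.2)]
        exact (hdynF s hs).1 j hj
      · by_cases hsj : s = t ∧ j = i
        · obtain ⟨hs', hj'⟩ := hsj; subst hs'; subst hj'
          rw [hhat_t_i, hhat_prev]
        · rw [key s j hsj]
          exact le_trans ((hdynF s hs).2 j hj) (dyn_le s j)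
    · intro s hs
      refine ⟨fun j hj => ?_, fun j hj => ?_⟩
      · have hji : j ≠ i := fun hji => hi (hji ▸ hj)
        rw [key s j (fun hsj => hji hsj.2)]
        exact (hbnd s hs).1 j hj
      · exact le_trans ((hbnd s hs).2 j hj) (hpt s j)
  have hobj : P.Obj d hhat < P.Obj d h := by
    unfold PlanData.Obj
    have hsum : ∑ s ∈ Finset.Icc 1 T, P.healthPen s (hhat s) <
        ∑ s ∈ Finset.Icc 1 T, P.healthPen s (h s) := by
      apply Finset.sum_lt_sum
      · intro s hs
        by_cases hst : s = t
        · rw [hst]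
          simp only [hhdef, if_pos rfl]
          have := (hmono t i (h t) (h t i) v hslack).2 hi
          rw [Function.update_eq_self] at this
          exact le_of_lt this
        · rw [hhat_eq s hst]
      · exact ⟨t, ht, by
          simp only [hhdef, if_pos rfl]
          have := (hmono t i (h t) (h t i) v hslack).2 hi
          rwa [Function.update_eq_self] at this⟩
    linarith
  refine ⟨⟨hhat, hgt, key, hfeas', hobj⟩, fun hopt => ?_⟩
  exact absurd (hopt b d hhat hfeas') (not_le.mpr hobj)
end

section
/- The relaxed treatment planning problem has the same solution set as the original optimal control problem. Precisely: a point (b, d, h) minimizes ∑_{t=1}^T φ_t(d_t) + ∑_{t=1}^T ψ_t(h_t) over the original feasible set (defined by the equality dynamics constraints h_t = f_t(h_{t-1}, d_t) for all t, the health bounds h_{t,i} ≤ H_{t,i} for i ∈ 𝒯 and h_{t,i} ≥ H_{t,i} for i ∉ 𝒯, and the dose constraints d_t = A_t b_t, 0 ≤ d_t ≤ D_t, 0 ≤ b_t ≤ B_t) if and only if it minimizes the same objective over the relaxed feasible set (identical except that the equality dynamics constraints are replaced by h_{t,i} ≥ f_{t,i}(h_{t-1}, d_t) for i ∈ 𝒯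 and h_{t,i} ≤ f_{t,i}(h_{t-1}, d_t) for i ∉ 𝒯), provided a minimizer of the relaxed problem exists and each ψ_t satisfies the monotonicity condition. -/
open Finset Matrix

lemma dyn_prev_shift {K n T : ℕ} (P : PlanData K n T) (t : ℕ) (g g' d : Fin K → ℝ)
    (j : Fin K) : P.dyn t g' d j = g' j - g j + P.dyn t g d j := by
  unfold PlanData.dyn; ring

lemma origFeas_relaxFeas {K n T : ℕ} (P : PlanData K n T)
    (b : ℕ → Fin n → ℝ) (d h : ℕ → Fin K → ℝ) (hf : P.OrigFeas b d h) :
    P.RelaxFeas b d h := by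
  obtain ⟨h0, hdyn, hbnd, hdose⟩ := hf
  exact ⟨h0, fun t ht => ⟨fun i _ => (hdyn t ht i).ge, fun i _ => (hdyn t ht i).le⟩,
    hbnd, hdose⟩

lemma relaxMin_origFeas {K n T : ℕ} (P : PlanData K n T) (hmono : P.StrictMonoCond)
    (b : ℕ → Fin n → ℝ) (d h : ℕ → Fin K → ℝ)
    (hf : P.RelaxFeas b d h)
    (hmin : ∀ b' d' h', P.RelaxFeas b' d' h' → P.Obj d h ≤ P.Obj d' h') :
    P.OrigFeas b d h := by
  obtain ⟨h0, hdynrel, hbnd, hdose⟩ := hf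
  refine ⟨h0, ?_, hbnd, hdose⟩
  intro t ht i
  by_contra hne
  obtain ⟨ht1, htT⟩ := Finset.mem_Icc.mp ht
  set v := P.dyn t (h (t - 1)) (d t) i with hv
  set h' : ℕ → Fin K → ℝ :=
    fun s => if s = t then Function.update (h t) i v else h s with hh'
  have h's : ∀ s, s ≠ t → h' s = h s := fun s hs => by simp [hh', hs]
  have h't : h' t = Function.update (h t) i v := by simp [hh']
  have h'0 : h' 0 = h 0 := h's 0 (by omega)
  -- key relation between old/new value at (t, i)
  have hkey : (i ∈ P.targets → v < h t i) ∧ (i ∉ P.targets → h t i < v) := by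
    constructor
    · intro him
      exact lt_of_le_of_ne ((hdynrel t ht).1 i him) (fun e => hne e.symm)
    · intro him
      exact lt_of_le_of_ne ((hdynrel t ht).2 i him) hne
  -- h' is relax-feasible
  have hfeas' : P.RelaxFeas b d h' := by
    refine ⟨h'0.trans h0, ?_, ?_, hdose⟩
    · intro s hs
      obtain ⟨hs1, hsT⟩ := Finset.mem_Icc.mp hs
      by_cases hst : s = t
      · subst hst
        have hpred : h' (s - 1) = h (s - 1) := h's _ (by omega)
        rw [hpred, h't]
        constructor
        · intro i' hi'
          by_cases hii : i' = i
          · subst hii; simp [← hv]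
          · rw [Function.update_of_ne hii]
            exact (hdynrel s hs).1 i' hi'
        · intro i' hi'
          by_cases hii : i' = i
          · subst hii; simp [← hv]
          · rw [Function.update_of_ne hii]
            exact (hdynrel s hs).2 i' hi'
      · by_cases hst1 : s = t + 1
        · have hpred : h' (s - 1) = Function.update (h t) i v := by
            rw [hst1]; simpa using h't
          rw [hpred, h's s hst]
          constructor
          · intro i' hi'
            by_cases hii : i' = i
            · subst hii
              have him : i' ∈ P.targets := hi'
              have hvle : v ≤ h t i' := (hkey.1 him).le
              have := (hdynrel s hs).1 i' him
              rw [dyn_prev_shift P s (h (s - 1)) (Function.update (h t) i' v) (d s) i']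
              have hpe : h (s - 1) = h t := by rw [hst1]; simp
              rw [hpe]
              simp only [Function.update_self]
              rw [hpe] at this
              linarith
            · rw [dyn_prev_shift P s (h (s - 1)) (Function.update (h t) i v) (d s) i',
                Function.update_of_ne hii]
              have hpe : h (s - 1) = h t := by rw [hst1]; simp
              rw [hpe]
              have := (hdynrel s hs).1 i' hi'
              rw [hpe] at this
              linarith
          · intro i' hi'
            by_cases hii : i' = i
            · subst hii
              have hvge : h t i' ≤ v := (hkey.2 hi').le
              have := (hdynrel s hs).2 i' hi'
              rw [dyn_prev_shift P s (h (s - 1)) (Function.update (h t) i' v) (d s) i']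
              have hpe : h (s - 1) = h t := by rw [hst1]; simp
              rw [hpe]
              simp only [Function.update_self]
              rw [hpe] at this
              linarith
            · rw [dyn_prev_shift P s (h (s - 1)) (Function.update (h t) i v) (d s) i',
                Function.update_of_ne hii]
              have hpe : h (s - 1) = h t := by rw [hst1]; simp
              rw [hpe]
              have := (hdynrel s hs).2 i' hi'
              rw [hpe] at this
              linarith
        · have hpred : h' (s - 1) = h (s - 1) := h's _ (by omega)
          rw [hpred, h's s hst]
          exact hdynrel s hs
    · intro s hs
      by_cases hst : s = t
      · subst hst
        rw [h't]
        constructor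
        · intro i' hi'
          by_cases hii : i' = i
          · subst hii
            simp only [Function.update_self]
            exact le_trans (hkey.1 hi').le ((hbnd s hs).1 i' hi')
          · rw [Function.update_of_ne hii]
            exact (hbnd s hs).1 i' hi'
        · intro i' hi'
          by_cases hii : i' = i
          · subst hii
            simp only [Function.update_self]
            exact le_trans ((hbnd s hs).2 i' hi') (hkey.2 hi').le
          · rw [Function.update_of_ne hii]
            exact (hbnd s hs).2 i' hi'
      · rw [h's s hst]
        exact hbnd s hs
  -- the objective strictly decreases
  have hpen : P.healthPen t (h' t) < P.healthPen t (h t) := by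
    rw [h't]
    by_cases him : i ∈ P.targets
    · have := (hmono t i (h t) v (h t i) (hkey.1 him)).1 him
      rwa [Function.update_eq_self] at this
    · have := (hmono t i (h t) (h t i) v (hkey.2 him)).2 him
      rwa [Function.update_eq_self] at this
  have hobj : P.Obj d h' < P.Obj d h := by
    unfold PlanData.Obj
    have hsum : ∑ s ∈ Finset.Icc 1 T, P.healthPen s (h' s)
        < ∑ s ∈ Finset.Icc 1 T, P.healthPen s (h s) := by
      apply Finset.sum_lt_sum
      · intro s _
        by_cases hst : s = t
        · subst hst; exact hpen.le
        · rw [h's s hst]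
      · exact ⟨t, ht, hpen⟩
    linarith
  exact absurd (hmin b d h' hfeas') (not_le.mpr hobj)

/-- The relaxed treatment planning problem has the same solution set as the original
optimal control problem: provided a minimizer of the relaxed problem exists and the
monotonicity condition holds, a point minimizes the objective over the original feasible
set iff it minimizes the objective over the relaxed feasible set. -/
theorem relaxed_and_original_same_minimizers {K n T : ℕ} (P : PlanData K n T)
    (hβ : ∀ t i, 0 ≤ P.beta t i)
    (hA : ∀ t i j, 0 ≤ P.A t i j)
    (hD : ∀ t i, 0 ≤ P.doseUB t i)
    (hB : ∀ t j, 0 ≤ P.beamUB t j)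
    (hmono : P.StrictMonoCond)
    (hexists : ∃ bs ds hs, P.RelaxFeas bs ds hs ∧
      ∀ b' d' h', P.RelaxFeas b' d' h' → P.Obj ds hs ≤ P.Obj d' h') :
    ∀ (b : ℕ → Fin n → ℝ) (d h : ℕ → Fin K → ℝ),
      (P.OrigFeas b d h ∧
        ∀ b' d' h', P.OrigFeas b' d' h' → P.Obj d h ≤ P.Obj d' h') ↔
      (P.RelaxFeas b d h ∧
        ∀ b' d' h', P.RelaxFeas b' d' h' → P.Obj d h ≤ P.Obj d' h') := by
  obtain ⟨bs, ds, hs, hsf, hsmin⟩ := hexists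
  have hsorig : P.OrigFeas bs ds hs := relaxMin_origFeas P hmono bs ds hs hsf hsmin
  intro b d h
  constructor
  · rintro ⟨hOf, hOmin⟩
    refine ⟨origFeas_relaxFeas P b d h hOf, fun b' d' h' hrf => ?_⟩
    exact le_trans (hOmin bs ds hs hsorig) (hsmin b' d' h' hrf)
  · rintro ⟨hRf, hRmin⟩
    exact ⟨relaxMin_origFeas P hmono b d h hRf hRmin,
      fun b' d' h' hof => hRmin b' d' h' (origFeas_relaxFeas P b' d' h' hof)⟩
end
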